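/- arXiv:1009.1867 — 4 statements merged into one kernel-verified Lean document; each statement's English description precedes it below -/
import Mathlib

section
/- Let N and p be positive integers with 2p ≤ N. Define α : ℤ → ℚ by α(i) = k/(2N) if the residue k = i mod N (with 0 ≤ k < N) satisfies 0 ≤ k < p, α(i) = p/(2N) if p ≤ k ≤ N - p, and α(i) = 1/2 - k/(2N) if N - p < k < N. Then for all integers i, j, one has α(i) + α(j) - α(i+j) ≥ 0. -/
/-!
Writing `k = i mod N`, the function `α` is `min k (min p (N - k)) / (2N)`: a tent of slope one
on `[0, N]`, truncated at height `p`. This truncated tent is subadditive on `[0, N]`, which handles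
residues whose sum stays below `N`; when `i mod N + j mod N` wraps around, the symmetry
`k ↦ N - k` of the tent reduces to the first case.
-/

def tent (N p k : ℤ) : ℤ := min k (min p (N - k))

theorem tent_add_le {N p a b : ℤ} (hp : 0 ≤ p) (ha : 0 ≤ a) (hb : 0 ≤ b) (hbN : b ≤ N) :
    tent N p (a + b) ≤ tent N p a + tent N p b := by
  unfold tent; omega

theorem tent_sub_left (N p k : ℤ) : tent N p (N - k) = tent N p k := by
  unfold tent; omega

theorem tent_add_emod_le {N p : ℤ} (hN : 0 < N) (hp : 0 ≤ p) (i j : ℤ) :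
    tent N p ((i + j) % N) ≤ tent N p (i % N) + tent N p (j % N) := by
  have hi₀ := Int.emod_nonneg i hN.ne'
  have hi := Int.emod_lt_of_pos i hN
  have hj₀ := Int.emod_nonneg j hN.ne'
  have hj := Int.emod_lt_of_pos j hN
  rw [Int.add_emod]
  rcases lt_or_ge (i % N + j % N) N with hlt | hge
  · rw [Int.emod_eq_of_lt (by omega) hlt]
    exact tent_add_le hp hi₀ hj₀ hj.le
  · rw [← Int.sub_emod_right, Int.emod_eq_of_lt (by omega) (by omega),
        ← tent_sub_left N p (i % N), ← tent_sub_left N p (j % N), ← tent_sub_left N p,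
        show N - (i % N + j % N - N) = (N - i % N) + (N - j % N) by ring]
    exact tent_add_le hp (by omega) (by omega) (by omega)

theorem piecewise_eq_tent {N p : ℕ} (hpN : 2 * p ≤ N) (hN : 0 < N) (k : ℤ) :
    (if k < (p : ℤ) then (k : ℚ) / (2 * N)
      else if k ≤ (N : ℤ) - (p : ℤ) then (p : ℚ) / (2 * N)
      else 1 / 2 - (k : ℚ) / (2 * N)) = (tent N p k : ℚ) / (2 * N) := by
  unfold tent
  split_ifs with h₁ h₂
  · rw [show min k (min (p : ℤ) (N - k)) = k by omega]
  · rw [show min k (min (p : ℤ) (N - k)) = p by omega, Int.cast_natCast]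
  · rw [show min k (min (p : ℤ) (N - k)) = N - k by omega]
    field_simp
    push_cast
    ring

/-- Scaling inequality: with `α` defined on `ℤ` via the residue `k = i mod N`
(`0 ≤ k < N`) by `α i = k/(2N)` if `k < p`, `α i = p/(2N)` if `p ≤ k ≤ N - p`,
and `α i = 1/2 - k/(2N)` if `N - p < k < N`, one has
`α i + α j - α (i+j) ≥ 0` for all integers `i, j`. -/
theorem scaling_inequality (N p : ℕ) (hp : 1 ≤ p) (hpN : 2 * p ≤ N)
    (α : ℤ → ℚ)
    (hα : ∀ i : ℤ, α i =
      if (i % (N : ℤ)) < (p : ℤ) then ((i % (N : ℤ) : ℤ) : ℚ) / (2 * N)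
      else if (i % (N : ℤ)) ≤ (N : ℤ) - (p : ℤ) then (p : ℚ) / (2 * N)
      else 1 / 2 - ((i % (N : ℤ) : ℤ) : ℚ) / (2 * N)) :
    ∀ i j : ℤ, 0 ≤ α i + α j - α (i + j) := by
  have hN : 0 < N := by omega
  have hα_tent (i : ℤ) : α i = (tent N p (i % N) : ℚ) / (2 * N) := by
    rw [hα, piecewise_eq_tent hpN hN]
  intro i j
  rw [hα_tent, hα_tent, hα_tent, ← add_div, ← sub_div]
  apply div_nonneg _ (by positivity)
  exact_mod_cast sub_nonneg.mpr (tent_add_emod_le (by omega) (by omega) i j)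
end

section
/- Let K ≥ 2, let x_1, ..., x_{2K-1} be a sequence of variables, and let A be the K×K matrix whose entry A_{mn} is the complete homogeneous symmetric polynomial h_{m-1} of degree m−1 in the K variables x_n, x_{n+1}, ..., x_{n+K-1}. Then det A = Π_{i₁ ∈ {K+1,...,2K-1}} Π_{i₂ ∈ {1,...,i₁-K}} (x_{i₁} − x_{i₂}). -/
/-- The complete homogeneous symmetric polynomial of degree `d` in the
variables `y 0, …, y (K-1)`: the sum of all monomials of degree `d`. -/
noncomputable def hpoly {R : Type*} [CommRing R] {K : ℕ} (y : Fin K → R) (d : ℕ) : R :=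
  ∑ s : Sym (Fin K) d, ((s : Multiset (Fin K)).map y).prod

section Aux

variable {R : Type*} [CommRing R]

lemma hpoly_zero' {K : ℕ} (y : Fin K → R) : hpoly y 0 = 1 := by
  rw [hpoly]
  rw [Finset.sum_eq_single (default : Sym (Fin K) 0)]
  · simp [Sym.eq_nil_of_card_zero]
  · intro b _ hb; exact absurd (Subsingleton.elim b default) hb
  · simp

lemma hopt' {K d : ℕ} (y : Option (Fin K) → R) :
    (∑ s : Sym (Option (Fin K)) (d+1), ((s : Multiset _).map y).prod)
    = y none * (∑ s : Sym (Option (Fin K)) d, ((s : Multiset _).map y).prod)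
      + ∑ s : Sym (Fin K) (d+1), ((s : Multiset _).map (y ∘ some)).prod := by
  rw [← Equiv.sum_comp (symOptionSuccEquiv (α := Fin K) (n := d)).symm]
  rw [Fintype.sum_sum_type, Finset.mul_sum]
  congr 1
  · apply Finset.sum_congr rfl
    intro s _
    have : (symOptionSuccEquiv (α := Fin K) (n := d)).symm (Sum.inl s) = none ::ₛ s := rfl
    rw [this, Sym.coe_cons, Multiset.map_cons, Multiset.prod_cons]
  · apply Finset.sum_congr rfl
    intro s _
    have : (symOptionSuccEquiv (α := Fin K) (n := d)).symm (Sum.inr s)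
        = s.map Function.Embedding.some := rfl
    rw [this, Sym.coe_map, Multiset.map_map]
    rfl

lemma hpoly_succ' {K d : ℕ} (y : Fin (K+1) → R) :
    hpoly y (d+1) = y 0 * hpoly y d + hpoly (y ∘ Fin.succ) (d+1) := by
  have reidx : ∀ (e : ℕ), hpoly y e
      = ∑ s : Sym (Option (Fin K)) e,
          ((s : Multiset _).map (y ∘ (finSuccEquiv K).symm)).prod := by
    intro e
    rw [hpoly, ← Equiv.sum_comp (Sym.equivCongr (finSuccEquiv K) (n := e))]
    apply Finset.sum_congr rfl
    intro s _
    simp [Sym.equivCongr, Sym.coe_map, Multiset.map_map, Function.comp_def]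
  rw [reidx, reidx, hopt']
  have h0 : (y ∘ (finSuccEquiv K).symm) none = y 0 := by simp
  rw [h0]
  congr 1

/-- List-based complete homogeneous symmetric function. -/
def Hc : List R → ℕ → R
  | _, 0 => 1
  | [], _+1 => 0
  | y :: ys, d+1 => y * Hc (y::ys) d + Hc ys (d+1)
  termination_by l d => (l.length, d)

@[simp] lemma Hc_zero (l : List R) : Hc l 0 = 1 := by cases l <;> simp [Hc]
@[simp] lemma Hc_nil_succ (d : ℕ) : Hc ([] : List R) (d+1) = 0 := by simp [Hc]
lemma Hc_cons_succ (y : R) (ys : List R) (d : ℕ) :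
    Hc (y :: ys) (d+1) = y * Hc (y::ys) d + Hc ys (d+1) := by rw [Hc]

lemma Hc_concat (l : List R) (z : R) (d : ℕ) :
    Hc (l ++ [z]) (d+1) = z * Hc (l ++ [z]) d + Hc l (d+1) := by
  induction l generalizing d with
  | nil => simp [Hc_cons_succ]
  | cons y t ih =>
    induction d with
    | zero =>
      simp only [List.cons_append, Hc_cons_succ, Hc_zero, mul_one, ih 0]
      ring
    | succ d ihd =>
      simp only [List.cons_append] at *
      have c1 := Hc_cons_succ y (t ++ [z]) (d+1)
      have c2 := ih (d+1)
      have c3 := Hc_cons_succ y t (d+1)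
      have c4 := Hc_cons_succ y (t ++ [z]) d
      have c5 := ihd
      linear_combination c1 + c2 - c3 + y * c5 - z * c4

lemma Hc_key (y z : R) (l : List R) (d : ℕ) :
    Hc (y :: l) (d+1) - Hc (l ++ [z]) (d+1) = (y - z) * Hc (y :: (l ++ [z])) d := by
  have c1 := Hc_cons_succ y (l ++ [z]) d
  have c2 := Hc_concat (y :: l) z d
  simp only [List.cons_append] at c2
  linear_combination c1 - c2

lemma hpoly_eq_Hc : ∀ {K : ℕ} (y : Fin K → R) (d : ℕ), hpoly y d = Hc (List.ofFn y) d := by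
  intro K
  induction K with
  | zero =>
    intro y d
    cases d with
    | zero => rw [hpoly_zero', List.ofFn_zero, Hc_zero]
    | succ d =>
      haveI : IsEmpty (Sym (Fin 0) (d+1)) := by
        constructor
        rintro ⟨m, hm⟩
        have hne : m ≠ 0 := by intro h; simp [h] at hm
        obtain ⟨a, -⟩ := Multiset.exists_mem_of_ne_zero hne
        exact a.elim0
      rw [hpoly, Finset.univ_eq_empty, Finset.sum_empty, List.ofFn_zero, Hc_nil_succ]
  | succ K ih =>
    intro y d
    induction d with
    | zero => rw [hpoly_zero', Hc_zero]
    | succ d ihd =>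
      rw [hpoly_succ', ihd, ih, List.ofFn_succ, Hc_cons_succ]
      rfl

lemma ofFn_window (x : ℕ → R) (t K : ℕ) :
    List.ofFn (fun r : Fin K => x (t + (r : ℕ))) = (List.range' t K).map x := by
  apply List.ext_getElem
  · simp
  · intro i h1 h2
    simp

/-- The key determinant computation, by induction on the size of the matrix. -/
lemma det_Hc (x : ℕ → R) :
    ∀ (M L s : ℕ), 1 ≤ L →
    Matrix.det (Matrix.of fun m n : Fin M =>
        Hc ((List.range' (s + (n : ℕ)) L).map x) (m : ℕ))
      = ∏ b ∈ Finset.range (M - 1), ∏ a ∈ Finset.range (M - 1 - b),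
          (x (s + b + L + a) - x (s + b)) := by
  intro M
  induction M with
  | zero =>
    intro L s _
    simp [Matrix.det_fin_zero]
  | succ M ih =>
    intro L s hL
    obtain ⟨L', rfl⟩ : ∃ L', L = L' + 1 := ⟨L - 1, by omega⟩
    rcases Nat.eq_zero_or_pos M with hM0 | hM0
    · subst hM0
      simp [Matrix.det_fin_one]
    set A : Matrix (Fin (M+1)) (Fin (M+1)) R :=
      Matrix.of (fun m n : Fin (M+1) =>
        Hc ((List.range' (s + (n:ℕ)) (L'+1)).map x) (m:ℕ)) with hA
    set E : Matrix (Fin (M+1)) (Fin (M+1)) R :=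
      Matrix.of (fun k n : Fin (M+1) =>
        if (k:ℕ) = (n:ℕ) then (1:R) else if (k:ℕ) = (n:ℕ)+1 then -1 else 0) with hE
    have detE : E.det = 1 := by
      rw [Matrix.det_of_lowerTriangular E (by
        intro i j hij
        have hij' : (i:ℕ) < (j:ℕ) := hij
        simp only [hE, Matrix.of_apply]
        rw [if_neg (by omega), if_neg (by omega)])]
      simp [hE]
    have AE1 : ∀ (m : Fin (M+1)) (n : Fin M),
        (A * E) m n.castSucc = A m n.castSucc - A m n.succ := by
      intro m n
      have hsplit : ∀ k : Fin (M+1), A m k * E k n.castSucc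
          = (if k = n.castSucc then A m n.castSucc else 0)
            + (if k = n.succ then -(A m n.succ) else 0) := by
        intro k
        by_cases h1 : k = n.castSucc
        · subst h1
          have hne : n.castSucc ≠ n.succ := ne_of_lt (Fin.castSucc_lt_succ (i := n))
          simp [hE, hne]
        · by_cases h2 : k = n.succ
          · subst h2
            have hne : ((n:ℕ)+1) ≠ (n:ℕ) := by omega
            simp [hE, Fin.val_succ, hne, h1]
          · have c1 : (k:ℕ) ≠ (n:ℕ) := fun h => h1 (Fin.ext (by simpa using h))
            have c2 : (k:ℕ) ≠ (n:ℕ)+1 := fun h => h2 (Fin.ext (by simpa using h))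
            simp [hE, c1, c2, h1, h2]
      rw [Matrix.mul_apply]
      rw [Finset.sum_congr rfl (fun k _ => hsplit k), Finset.sum_add_distrib,
        Finset.sum_ite_eq' Finset.univ, Finset.sum_ite_eq' Finset.univ]
      simp [sub_eq_add_neg]
    have AE2 : ∀ m : Fin (M+1), (A * E) m (Fin.last M) = A m (Fin.last M) := by
      intro m
      have hsplit : ∀ k : Fin (M+1), A m k * E k (Fin.last M)
          = (if k = Fin.last M then A m (Fin.last M) else 0) := by
        intro k
        by_cases h1 : k = Fin.last M
        · subst h1; simp [hE]
        · have c1 : (k:ℕ) ≠ (Fin.last M : ℕ) := fun h => h1 (Fin.ext (by simpa using h))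
          have c2 : (k:ℕ) ≠ (Fin.last M : ℕ)+1 := by
            have := k.isLt
            simp only [Fin.val_last] at *
            omega
          rw [Fin.val_last] at c1 c2
          simp [hE, c1, c2, h1]
      rw [Matrix.mul_apply]
      rw [Finset.sum_congr rfl (fun k _ => hsplit k), Finset.sum_ite_eq' Finset.univ]
      simp
    have row0 : ∀ n : Fin M, (A * E) 0 n.castSucc = 0 := by
      intro n
      rw [AE1]
      simp [hA]
    have minor_eq : (A * E).submatrix Fin.succ (Fin.last M).succAbove
        = Matrix.of (fun m n : Fin M =>
            (x (s + (n:ℕ)) - x (s + (n:ℕ) + 1 + L')) *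
              Hc ((List.range' (s + (n:ℕ)) (L'+2)).map x) (m:ℕ)) := by
      ext m n
      rw [Matrix.submatrix_apply, Fin.succAbove_last, AE1]
      simp only [hA, Matrix.of_apply, Fin.coe_castSucc, Fin.val_succ]
      have e1 : List.range' (s + (n:ℕ)) (L'+1)
          = (s + (n:ℕ)) :: List.range' (s + (n:ℕ) + 1) L' := List.range'_succ
      have e2 : List.range' (s + ((n:ℕ)+1)) (L'+1)
          = List.range' (s + (n:ℕ) + 1) L' ++ [s + (n:ℕ) + 1 + L'] := by
        rw [show s + ((n:ℕ)+1) = s + (n:ℕ) + 1 from by omega, List.range'_1_concat]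
      have e3 : List.range' (s + (n:ℕ)) (L'+2)
          = (s + (n:ℕ)) :: (List.range' (s + (n:ℕ) + 1) L' ++ [s + (n:ℕ) + 1 + L']) := by
        rw [show L' + 2 = (L'+1) + 1 from rfl, List.range'_succ, List.range'_1_concat]
      rw [e1, e2, e3]
      simp only [List.map_cons, List.map_append, List.map_cons, List.map_nil]
      exact Hc_key _ _ _ _
    have hdet : A.det = (A * E).det := by rw [Matrix.det_mul, detE, mul_one]
    rw [hdet]
    rw [Matrix.det_succ_row_zero]
    rw [Finset.sum_eq_single (Fin.last M) (fun j _ hj => by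
        have hjlt : (j:ℕ) < M := by
          have := j.isLt
          rcases Nat.lt_or_ge (j:ℕ) M with h | h
          · exact h
          · exact absurd (Fin.ext (by simp; omega) : j = Fin.last M) hj
        have : j = (⟨(j:ℕ), hjlt⟩ : Fin M).castSucc := Fin.ext rfl
        rw [this, row0]
        ring)
      (by simp)]
    have hAE0last : (A * E) 0 (Fin.last M) = 1 := by
      rw [AE2]
      simp [hA]
    rw [hAE0last, minor_eq]
    erw [Matrix.det_mul_row]
    rw [show (fun m n : Fin M => Hc ((List.range' (s + (n:ℕ)) (L'+2)).map x) (m:ℕ))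
      = Matrix.of (fun m n : Fin M => Hc ((List.range' (s + (n:ℕ)) (L'+2)).map x) (m:ℕ))
      from rfl, ih (L'+2) s (by omega)]
    -- Now pure product manipulation.
    have hlast : (Fin.last M : ℕ) = M := rfl
    rw [hlast]
    have fin2range : (∏ j : Fin M, (x (s + (j:ℕ)) - x (s + (j:ℕ) + 1 + L')))
        = ∏ b ∈ Finset.range M, (x (s + b) - x (s + b + 1 + L')) :=
      Fin.prod_univ_eq_prod_range (fun b => x (s + b) - x (s + b + 1 + L')) M
    rw [fin2range]
    have split : ∀ b ∈ Finset.range M,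
        (∏ a ∈ Finset.range (M - b), (x (s + b + (L'+1) + a) - x (s + b)))
        = (x (s + b + 1 + L') - x (s + b)) *
            ∏ a ∈ Finset.range (M - 1 - b), (x (s + b + (L'+2) + a) - x (s + b)) := by
      intro b hb
      rw [Finset.mem_range] at hb
      rw [show M - b = (M - 1 - b) + 1 from by omega, Finset.prod_range_succ']
      rw [mul_comm]
      congr 1
      · congr 1
        exact congrArg x (by omega)
      · apply Finset.prod_congr rfl
        intro a _
        congr 1
        exact congrArg x (by omega)
    rw [show M + 1 - 1 = M from by omega]
    rw [Finset.prod_congr rfl split, Finset.prod_mul_distrib]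
    have htail : (∏ b ∈ Finset.range M,
          ∏ a ∈ Finset.range (M - 1 - b), (x (s + b + (L'+2) + a) - x (s + b)))
        = ∏ b ∈ Finset.range (M - 1),
          ∏ a ∈ Finset.range (M - 1 - b), (x (s + b + (L'+2) + a) - x (s + b)) := by
      rw [show Finset.range M = Finset.range ((M - 1) + 1) from by congr 1; omega,
        Finset.prod_range_succ, show (M - 1) - (M - 1) = 0 from by omega]
      simp
    rw [htail]
    have hneg : ((-1 : R) ^ M) * ∏ b ∈ Finset.range M, (x (s + b) - x (s + b + 1 + L'))
        = ∏ b ∈ Finset.range M, (x (s + b + 1 + L') - x (s + b)) := by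
      rw [show ((-1 : R) ^ M) = ∏ _b ∈ Finset.range M, (-1 : R) from by
        rw [Finset.prod_const, Finset.card_range], ← Finset.prod_mul_distrib]
      apply Finset.prod_congr rfl
      intro b _
      ring
    calc (-1 : R) ^ M * 1 *
          ((∏ b ∈ Finset.range M, (x (s + b) - x (s + b + 1 + L'))) *
            ∏ b ∈ Finset.range (M - 1),
              ∏ a ∈ Finset.range (M - 1 - b), (x (s + b + (L'+2) + a) - x (s + b)))
        = ((-1 : R) ^ M * ∏ b ∈ Finset.range M, (x (s + b) - x (s + b + 1 + L'))) *
            ∏ b ∈ Finset.range (M - 1),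
              ∏ a ∈ Finset.range (M - 1 - b), (x (s + b + (L'+2) + a) - x (s + b)) := by
          ring
      _ = _ := by rw [hneg]

end Aux

/-- Determinant of the matrix of windowed complete homogeneous symmetric
polynomials: for a sequence `x 1, …, x (2K-1)` and the `K×K` matrix `A` with
`A m n = h_{m-1}(x n, …, x (n+K-1))` (1-based `m, n`),
`det A = Π_{i₁ = K+1}^{2K-1} Π_{i₂ = 1}^{i₁ - K} (x i₁ − x i₂)`. -/
theorem det_hpoly_window {R : Type*} [CommRing R] (K : ℕ) (hK : 2 ≤ K) (x : ℕ → R) :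
    Matrix.det (Matrix.of fun m n : Fin K =>
        hpoly (fun r : Fin K => x ((n : ℕ) + 1 + (r : ℕ))) (m : ℕ)) =
      ∏ a ∈ Finset.Icc (K + 1) (2 * K - 1), ∏ b ∈ Finset.Icc 1 (a - K), (x a - x b) := by
  have entry : (Matrix.of fun m n : Fin K =>
        hpoly (fun r : Fin K => x ((n : ℕ) + 1 + (r : ℕ))) (m : ℕ))
      = Matrix.of (fun m n : Fin K => Hc ((List.range' (1 + (n:ℕ)) K).map x) (m:ℕ)) := by
    ext m n
    simp only [Matrix.of_apply]
    rw [hpoly_eq_Hc, show (fun r : Fin K => x ((n:ℕ) + 1 + (r:ℕ)))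
      = fun r : Fin K => x ((1 + (n:ℕ)) + (r:ℕ)) from by funext r; congr 1; omega]
    rw [ofFn_window]
  rw [entry, det_Hc x K K 1 (by omega)]
  -- LHS : ∏_{b ∈ range (K-1)} ∏_{a ∈ range (K-1-b)} (x (1+b+K+a) - x (1+b))
  -- RHS : ∏_{a ∈ Icc (K+1) (2K-1)} ∏_{b ∈ Icc 1 (a-K)} (x a - x b)
  rw [show (2 * K - 1) = (K + 1) + (K - 2) from by omega]
  rw [← Finset.Ico_add_one_right_eq_Icc, Finset.prod_Ico_eq_prod_range]
  rw [show (K + 1) + (K - 2) + 1 - (K + 1) = K - 1 from by omega]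
  have inner : ∀ j ∈ Finset.range (K - 1),
      (∏ b ∈ Finset.Icc 1 ((K + 1 + j) - K), (x (K + 1 + j) - x b))
      = ∏ i ∈ Finset.range (j + 1), (x (K + 1 + j) - x (1 + i)) := by
    intro j _
    rw [show (K + 1 + j) - K = j + 1 from by omega]
    rw [← Finset.Ico_add_one_right_eq_Icc, Finset.prod_Ico_eq_prod_range]
    rw [show j + 1 + 1 - 1 = j + 1 from by omega]
  rw [Finset.prod_congr rfl inner]
  -- triangle swap
  have tri : (∏ j ∈ Finset.range (K-1), ∏ i ∈ Finset.range (j+1), (x (K+1+j) - x (1+i)))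
      = ∏ i ∈ Finset.range (K-1), ∏ j ∈ Finset.Ico i (K-1), (x (K+1+j) - x (1+i)) :=
    Finset.prod_comm' (by
      intro j i
      simp only [Finset.mem_range, Finset.mem_Ico]
      omega)
  rw [tri]
  apply Finset.prod_congr rfl
  intro b hb
  rw [Finset.mem_range] at hb
  rw [Finset.prod_Ico_eq_prod_range]
  apply Finset.prod_congr rfl
  intro a _
  congr 1
  exact congrArg x (by omega)
end

section
/- Let K ≥ 2 and fix c with 2 ≤ c ≤ K. Let x_1, ..., x_{2K-1} satisfy x_{K+c-1} = x_1. Let e_m denote the elementary symmetric polynomial of degree m in the 2K−2 variables {x_{1+r} : 0 ≤ r ≤ 2K−2, r ≠ K+c−2}. Then for every n ∈ {1,...,K}, Σ_{m=1}^{K} (−1)^{K−m} e_{K−m} · h_{m−1}(x_n, ..., x_{n+K-1}) = 0, i.e., the rows of the matrix A_{mn} = h_{m-1}(x_n,...,x_{n+K-1}) are linearly dependent with coefficients (−1)^{K−m} e_{K−m}. -/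
open PowerSeries

section CommRing

variable {R : Type*} [CommRing R]

namespace Multiset

theorem esymm_cons_succ (a : R) (s : Multiset R) (j : ℕ) :
    (a ::ₘ s).esymm (j + 1) = s.esymm (j + 1) + a * s.esymm j := by
  simp only [esymm, powersetCard_cons, map_add, sum_add, map_map, Function.comp_def, prod_cons,
    sum_map_mul_left]

theorem esymm_eq_zero_of_card_lt (s : Multiset R) {j : ℕ} (h : card s < j) : s.esymm j = 0 := by
  simp [esymm, powersetCard_eq_empty _ h]

end Multiset

namespace PowerSeries

theorem mk_pow_mul_one_sub_C_mul_X (a : R) : mk (a ^ ·) * (1 - C a * X) = 1 := by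
  simpa [rescale_mk, rescale_X] using congrArg (rescale a) (mk_one_mul_one_sub_eq_one R)

theorem coeff_prod_one_sub_C_mul_X (s : Multiset R) (j : ℕ) :
    coeff j (s.map fun a => 1 - C a * X).prod = (-1) ^ j * s.esymm j := by
  induction s using Multiset.induction generalizing j with
  | empty =>
    rcases j with _ | j
    · simp [Multiset.esymm]
    · simp [coeff_one, Multiset.esymm_eq_zero_of_card_lt 0 j.succ_pos]
  | cons a s ih =>
    rw [Multiset.map_cons, Multiset.prod_cons, sub_mul, one_mul, mul_assoc, map_sub]
    cases j with
    | zero => simpa [Multiset.esymm] using ih 0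
    | succ j =>
      rw [coeff_C_mul, coeff_succ_X_mul, ih, ih, Multiset.esymm_cons_succ]
      ring

theorem mk_hpoly {K : ℕ} (y : Fin K → R) : mk (hpoly y) = ∏ i, mk (y i ^ ·) := by
  classical
  ext d
  simp only [coeff_mk, coeff_prod, hpoly]
  refine Finset.sum_bij' (fun s _ => Multiset.toFinsupp s.1)
    (fun l hl => ⟨Finsupp.toMultiset l, ?_⟩) ?_ (fun _ _ => Finset.mem_univ _) ?_ ?_ ?_
  · simpa [Finset.mem_finsuppAntidiag, Finsupp.card_toMultiset, Finsupp.sum_fintype] using hl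
  · intro s _
    refine Finset.mem_finsuppAntidiag.2 ⟨?_, Finset.subset_univ _⟩
    calc ∑ i, Multiset.toFinsupp (s : Multiset (Fin K)) i = ∑ i, (s : Multiset (Fin K)).count i :=
          rfl
      _ = d := (Multiset.sum_count_eq_card fun i _ => Finset.mem_univ i).trans s.2
  · intro s _
    ext1
    simp
  · simp
  · intro s _
    simp [Multiset.prod_map_eq_finprod, finprod_eq_prod_of_fintype]

theorem mk_hpoly_mul_prod_one_sub_C_mul_X {K : ℕ} (y : Fin K → R) (t : Multiset R) :
    mk (hpoly y) * ((Finset.univ.val.map y + t).map fun a => 1 - C a * X).prod =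
      (t.map fun a => 1 - C a * X).prod := by
  rw [mk_hpoly, Multiset.map_add, Multiset.prod_add, ← mul_assoc, Multiset.map_map,
    ← Finset.prod_eq_multiset_prod, ← Finset.prod_mul_distrib]
  simp [mk_pow_mul_one_sub_C_mul_X]

end PowerSeries

theorem sum_hpoly_mul_esymm_eq_zero {K : ℕ} (y : Fin K → R) {s : Multiset R}
    (hy : Finset.univ.val.map y ≤ s) {d : ℕ} (hd : Multiset.card s < K + d) :
    ∑ k ∈ Finset.range (d + 1), hpoly y k * ((-1) ^ (d - k) * s.esymm (d - k)) = 0 := by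
  obtain ⟨t, rfl⟩ := Multiset.le_iff_exists_add.1 hy
  have ht : Multiset.card t < d := by simpa using hd
  have h := congrArg (coeff d) (mk_hpoly_mul_prod_one_sub_C_mul_X y t)
  rw [coeff_mul, Finset.Nat.sum_antidiagonal_eq_sum_range_succ_mk, coeff_prod_one_sub_C_mul_X,
    Multiset.esymm_eq_zero_of_card_lt _ ht, mul_zero] at h
  simpa only [coeff_mk, coeff_prod_one_sub_C_mul_X] using h

end CommRing

theorem map_window_le_map_range_filter_ne {α : Type*} {K c n : ℕ} (hc2 : 2 ≤ c) (hcK : c ≤ K)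
    (hn1 : 1 ≤ n) (hnK : n ≤ K) (x : ℕ → α) (hx : x (K + c - 1) = x 1) :
    Finset.univ.val.map (fun r : Fin K => x (n + r)) ≤
      ((Finset.range (2 * K - 1)).filter (fun r => r ≠ K + c - 2)).val.map (fun r => x (1 + r)) := by
  -- Folding the index `K + c - 1` onto `1` keeps the window injective: as `c ≥ 2`, the window
  -- never contains both indices.
  set φ : ℕ → ℕ := fun i => if i = K + c - 1 then 1 else i
  have hxφ (i : ℕ) : x (φ i) = x i := by
    by_cases h : i = K + c - 1 <;> simp [φ, h, hx]
  have hinj : Function.Injective fun r : Fin K => φ (n + r) := by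
    intro a b h
    simp only [φ] at h
    split_ifs at h <;> omega
  calc Finset.univ.val.map (fun r : Fin K => x (n + r))
      = (Finset.univ.val.map fun r : Fin K => φ (n + r)).map x := by
        simp only [Multiset.map_map, Function.comp_def, hxφ]
    _ ≤ (((Finset.range (2 * K - 1)).filter (fun r => r ≠ K + c - 2)).val.map (1 + ·)).map x := by
        refine Multiset.map_le_map ((Multiset.le_iff_subset (Finset.univ.nodup.map hinj)).2 ?_)
        intro i hi
        obtain ⟨r, -, rfl⟩ := Multiset.mem_map.1 hi
        refine Multiset.mem_map.2 ⟨φ (n + r) - 1, ?_, ?_⟩ <;>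
          simp only [φ, Finset.mem_val, Finset.mem_filter, Finset.mem_range] <;>
          split_ifs <;> omega
    _ = _ := by rw [Multiset.map_map]; rfl

theorem hpoly_rows_dependent_general {R : Type*} [CommRing R] (K c : ℕ)
    (hc2 : 2 ≤ c) (hcK : c ≤ K) (x : ℕ → R) (hx : x (K + c - 1) = x 1) :
    ∀ n ∈ Finset.Icc 1 K,
      ∑ m ∈ Finset.Icc 1 K,
        (-1 : R) ^ (K - m) *
          Multiset.esymm
            ((((Finset.range (2 * K - 1)).filter (fun r => r ≠ K + c - 2)).val).map
              (fun r => x (1 + r))) (K - m) *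
          hpoly (fun r : Fin K => x (n + (r : ℕ))) (m - 1) = 0 := by
  intro n hn
  obtain ⟨hn1, hnK⟩ := Finset.mem_Icc.1 hn
  have hcard : Multiset.card ((((Finset.range (2 * K - 1)).filter
      (fun r => r ≠ K + c - 2)).val).map (fun r => x (1 + r))) = 2 * K - 2 := by
    rw [Multiset.card_map, ← Finset.card_def, Finset.filter_ne',
      Finset.card_erase_of_mem (Finset.mem_range.2 (by omega)), Finset.card_range]
    omega
  have key := sum_hpoly_mul_esymm_eq_zero _
    (map_window_le_map_range_filter_ne hc2 hcK hn1 hnK x hx) (d := K - 1) (by omega)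
  rw [Nat.sub_add_cancel (by omega)] at key
  rw [← Finset.Ico_add_one_right_eq_Icc, Finset.sum_Ico_eq_sum_range, Nat.add_sub_cancel, ← key]
  refine Finset.sum_congr rfl fun k _ => ?_
  rw [Nat.add_sub_cancel_left, Nat.sub_sub]
  ring

/-- Row dependency: let `2 ≤ c ≤ K` and `x (K+c-1) = x 1`, and let `e_m` be the
elementary symmetric polynomial of degree `m` in the `2K−2` variables
`{x (1+r) : 0 ≤ r ≤ 2K−2, r ≠ K+c−2}`. Then for every `n ∈ {1,…,K}`,
`Σ_{m=1}^{K} (−1)^{K−m} e_{K−m} · h_{m−1}(x n, …, x (n+K-1)) = 0`. -/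
theorem hpoly_rows_dependent {R : Type*} [CommRing R] (K c : ℕ) (hK : 2 ≤ K)
    (hc2 : 2 ≤ c) (hcK : c ≤ K) (x : ℕ → R) (hx : x (K + c - 1) = x 1) :
    ∀ n ∈ Finset.Icc 1 K,
      ∑ m ∈ Finset.Icc 1 K,
        (-1 : R) ^ (K - m) *
          Multiset.esymm
            ((((Finset.range (2 * K - 1)).filter (fun r => r ≠ K + c - 2)).val).map
              (fun r => x (1 + r))) (K - m) *
          hpoly (fun r : Fin K => x (n + (r : ℕ))) (m - 1) = 0 :=
  hpoly_rows_dependent_general K c hc2 hcK x hx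
end

section
/- Let N ≥ 2 and let S be the N×N matrix with S_{ij} nonzero only for |i−j| ≤ 1 mod N (tridiagonal cyclic form), with entries given by the bosonization formulas S_{ii} = (N/(2πi))(v_{i-1} − v_i), S_{i,i+1} = MN·e(u_i), S_{i+1,i} = MN·e(−u_i) (indices mod N, Σu_i = Σv_i = 0). Then Σ_{i=1}^{N} S_{i,i+1}·S_{i,i-1} = M²N²·Σ_{i=1}^{N} e(u_{i+1} − u_i), and the Hamiltonian H = (N²/2)Σv_i² + 4π²M²N²·Σ e(u_{i+1}−u_i) satisfies H = (−π²/N)·Σ_{m,n=1}^{N} Σ_{k=1}^{N-1} S_{mm}S_{nn}·e(k(n−m)/N)·(1−cos(2πk/N))^{-1} + 4π²Σᵢ S_{i,i+1}S_{i,i-1} = N²·[(1/2)Σv_i² + 4π²M²Σ e(u_{i+1}−u_i)]. -/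
open Complex

section BosonizationHelpers

noncomputable def EE (N : ℕ) (a : ZMod N) : ℂ :=
  Complex.exp (2 * Real.pi * Complex.I * ((a.val : ℂ) / N))

lemma EE_zero (N : ℕ) [NeZero N] : EE N 0 = 1 := by
  simp [EE, ZMod.val_zero]

lemma EE_add (N : ℕ) [NeZero N] (a b : ZMod N) : EE N (a + b) = EE N a * EE N b := by
  have hN : (N : ℂ) ≠ 0 := Nat.cast_ne_zero.mpr (NeZero.ne N)
  set q : ℕ := (a.val + b.val) / N with hq
  have h : a.val + b.val = (a + b).val + N * q := by
    rw [ZMod.val_add]; exact (Nat.mod_add_div _ _).symm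
  have hC : (a.val : ℂ) + (b.val : ℂ) = ((a+b).val : ℂ) + (N:ℂ) * (q:ℂ) := by
    exact_mod_cast congrArg (Nat.cast : ℕ → ℂ) h
  rw [EE, EE, EE, ← Complex.exp_add]
  have hexp : 2 * (Real.pi:ℂ) * Complex.I * ((a.val : ℂ) / N) + 2 * Real.pi * Complex.I * ((b.val : ℂ) / N)
      = 2 * Real.pi * Complex.I * (((a+b).val : ℂ) / N) + (q:ℂ) * (2 * Real.pi * Complex.I) := by
    have hq' : (q:ℂ) = ((a.val:ℂ) + (b.val:ℂ) - ((a+b).val:ℂ))/N := by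
      rw [eq_div_iff hN]; linear_combination -hC
    rw [hq']; ring
  rw [hexp, Complex.exp_add,
    show ((q:ℂ) * (2 * Real.pi * Complex.I)) = ((q:ℤ):ℂ) * (2 * Real.pi * Complex.I) by norm_num,
    Complex.exp_int_mul_two_pi_mul_I, mul_one]

lemma EE_ne_one (N : ℕ) [NeZero N] {a : ZMod N} (ha : a ≠ 0) : EE N a ≠ 1 := by
  intro hone
  rw [EE, Complex.exp_eq_one_iff] at hone
  obtain ⟨n, hn⟩ := hone
  have hN : (N : ℂ) ≠ 0 := Nat.cast_ne_zero.mpr (NeZero.ne N)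
  have hpi : (2 * (Real.pi:ℂ) * Complex.I) ≠ 0 := by
    simp [Real.pi_ne_zero, Complex.I_ne_zero]
  have h2 : (2 * (Real.pi:ℂ) * Complex.I) * ((a.val:ℂ)/N) = (2 * (Real.pi:ℂ) * Complex.I) * n := by
    linear_combination hn
  have h3 := mul_left_cancel₀ hpi h2
  rw [div_eq_iff hN] at h3
  have hz : (a.val : ℤ) = n * N := by exact_mod_cast h3
  have h1 : 0 < a.val := Nat.pos_of_ne_zero (by simpa [ZMod.val_eq_zero] using ha)
  have h2' : a.val < N := ZMod.val_lt a
  have hNpos : (0:ℤ) < N := Int.natCast_pos.mpr (Nat.pos_of_ne_zero (NeZero.ne N))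
  rcases le_or_gt n 0 with h | h
  · have : n * N ≤ 0 := mul_nonpos_of_nonpos_of_nonneg h (le_of_lt hNpos)
    omega
  · have : (N:ℤ) ≤ n * N := le_mul_of_one_le_left (le_of_lt hNpos) h
    omega

lemma EE_pow_N (N : ℕ) [NeZero N] (a : ZMod N) : EE N a ^ N = 1 := by
  have hN : (N : ℂ) ≠ 0 := Nat.cast_ne_zero.mpr (NeZero.ne N)
  rw [EE, ← Complex.exp_nat_mul]
  rw [show ((N:ℂ) * (2 * Real.pi * Complex.I * ((a.val : ℂ) / N))) = ((a.val : ℤ) : ℂ) * (2 * Real.pi * Complex.I) by rw [Int.cast_natCast]; field_simp]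
  exact Complex.exp_int_mul_two_pi_mul_I _

lemma EE_orth (N : ℕ) [NeZero N] (a : ZMod N) :
    ∑ k ∈ Finset.range N, EE N a ^ k = if a = 0 then (N : ℂ) else 0 := by
  split_ifs with h
  · simp [h, EE_zero]
  · rw [geom_sum_eq (EE_ne_one N h), EE_pow_N, sub_self, zero_div]

lemma EE_pow_eq (N : ℕ) [NeZero N] (a : ZMod N) (k : ℕ) :
    EE N a ^ k = Complex.exp (2 * Real.pi * Complex.I * ((k : ℂ) * (a.val : ℂ) / N)) := by
  rw [EE, ← Complex.exp_nat_mul]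
  congr 1
  ring

lemma EE_neg_mul (N : ℕ) [NeZero N] (a : ZMod N) : EE N (-a) * EE N a = 1 := by
  rw [← EE_add]; simp [EE_zero]

lemma sumV (N : ℕ) [NeZero N] (v : ZMod N → ℂ) (k : ℕ) :
    (∑ n : ZMod N, (v (n-1) - v n) * EE N n ^ k)
      = (EE N 1 ^ k - 1) * ∑ n : ZMod N, v n * EE N n ^ k := by
  have h1 : (∑ n : ZMod N, v (n-1) * EE N n ^ k) = EE N 1 ^ k * ∑ n : ZMod N, v n * EE N n ^ k := by
    rw [Finset.mul_sum]
    refine Fintype.sum_equiv (Equiv.subRight (1:ZMod N)) _ _ (fun n => ?_)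
    have h : EE N n = EE N 1 * EE N (n - 1) := by
      rw [← EE_add]; congr 1; ring
    simp only [Equiv.subRight_apply]
    rw [h, mul_pow]; ring
  calc (∑ n : ZMod N, (v (n-1) - v n) * EE N n ^ k)
      = (∑ n : ZMod N, v (n-1) * EE N n ^ k) - ∑ n : ZMod N, v n * EE N n ^ k := by
        rw [← Finset.sum_sub_distrib]; exact Finset.sum_congr rfl fun n _ => by ring
    _ = _ := by rw [h1]; ring

lemma sumW (N : ℕ) [NeZero N] (v : ZMod N → ℂ) (k : ℕ) :
    (∑ m : ZMod N, (v (m-1) - v m) * EE N (-m) ^ k)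
      = (EE N (-1) ^ k - 1) * ∑ m : ZMod N, v m * EE N (-m) ^ k := by
  have h1 : (∑ m : ZMod N, v (m-1) * EE N (-m) ^ k) = EE N (-1) ^ k * ∑ m : ZMod N, v m * EE N (-m) ^ k := by
    rw [Finset.mul_sum]
    refine Fintype.sum_equiv (Equiv.subRight (1:ZMod N)) _ _ (fun m => ?_)
    have h : EE N (-m) = EE N (-1) * EE N (-(m - 1)) := by
      rw [← EE_add]; congr 1; ring
    simp only [Equiv.subRight_apply]
    rw [h, mul_pow]; ring
  calc (∑ m : ZMod N, (v (m-1) - v m) * EE N (-m) ^ k)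
      = (∑ m : ZMod N, v (m-1) * EE N (-m) ^ k) - ∑ m : ZMod N, v m * EE N (-m) ^ k := by
        rw [← Finset.sum_sub_distrib]; exact Finset.sum_congr rfl fun m _ => by ring
    _ = _ := by rw [h1]; ring

lemma cosFact (N : ℕ) [NeZero N] (hN : 2 ≤ N) (k : ℕ) (hk : k ∈ Finset.Icc 1 (N-1)) :
    2 * (1 - Complex.cos (2 * Real.pi * (k:ℂ) / N)) = (EE N 1 ^ k - 1) * (EE N (-1) ^ k - 1)
    ∧ (1 - Complex.cos (2 * Real.pi * (k:ℂ) / N)) ≠ 0 := by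
  haveI : Fact (1 < N) := ⟨lt_of_lt_of_le one_lt_two hN⟩
  have hNC : (N:ℂ) ≠ 0 := Nat.cast_ne_zero.mpr (NeZero.ne N)
  simp only [Finset.mem_Icc] at hk
  have hkN : k < N := by omega
  set E := EE N 1 ^ k with hE
  set F := EE N (-1) ^ k with hF
  have hEF : E * F = 1 := by
    rw [hE, hF, ← mul_pow, show (EE N 1 * EE N (-1)) = 1 by rw [mul_comm]; exact EE_neg_mul N 1, one_pow]
  have hEval : E = EE N ((k : ZMod N)) := by
    rw [hE, EE_pow_eq, EE]
    congr 2
    rw [ZMod.val_one, ZMod.val_natCast_of_lt hkN]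
    push_cast; ring
  have hEne : E ≠ 1 := by
    rw [hEval]
    apply EE_ne_one
    intro h
    have hv := ZMod.val_natCast_of_lt hkN
    rw [h, ZMod.val_zero] at hv
    omega
  have hE0 : E ≠ 0 := by
    rw [hE, EE]
    exact pow_ne_zero _ (Complex.exp_ne_zero _)
  have hcos : Complex.cos (2 * Real.pi * (k:ℂ) / N) = (E + F) / 2 := by
    rw [Complex.cos]
    have hz1 : (2 * (Real.pi:ℂ) * (k:ℂ) / N) * Complex.I = (k:ℂ) * (2 * Real.pi * Complex.I * ((1:ℂ) / N)) := by ring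
    have hz2 : -(2 * (Real.pi:ℂ) * (k:ℂ) / N) * Complex.I = -((k:ℂ) * (2 * Real.pi * Complex.I * ((1:ℂ) / N))) := by ring
    have hEexp : E = Complex.exp ((k:ℂ) * (2 * Real.pi * Complex.I * ((1:ℂ)/N))) := by
      rw [hE, EE, ← Complex.exp_nat_mul, ZMod.val_one]
      norm_num
    have hFexp : F = Complex.exp (-((k:ℂ) * (2 * Real.pi * Complex.I * ((1:ℂ)/N)))) := by
      rw [Complex.exp_neg, ← hEexp]
      exact eq_inv_of_mul_eq_one_left (by rw [mul_comm]; exact hEF)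
    rw [hz1, hz2, ← hEexp, ← hFexp]
    try ring
  constructor
  · rw [hcos]
    linear_combination -hEF
  · rw [hcos]
    intro h
    have h22 : E + F = 2 := by linear_combination (-2:ℂ) * h
    have hFne : F ≠ 1 := by
      intro hf
      rw [hf, mul_one] at hEF
      exact hEne hEF
    have : (E - 1) * (F - 1) = 0 := by linear_combination hEF - h22
    rcases mul_eq_zero.mp this with h' | h'
    · exact hEne (by linear_combination h')
    · exact hFne (by linear_combination h')

lemma parseval (N : ℕ) [NeZero N] (v : ZMod N → ℂ) (hv : ∑ i, v i = 0) :
    ∑ k ∈ Finset.Icc 1 (N-1), (∑ m : ZMod N, v m * EE N (-m) ^ k) * (∑ n : ZMod N, v n * EE N n ^ k)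
      = N * ∑ i : ZMod N, v i ^ 2 := by
  have hrange : Finset.range N = insert 0 (Finset.Icc 1 (N-1)) := by
    have := Nat.pos_of_ne_zero (NeZero.ne N)
    ext k; simp [Finset.mem_range, Finset.mem_Icc]; omega
  have h0 : (0:ℕ) ∉ Finset.Icc 1 (N-1) := by simp
  have hIcc : ∑ k ∈ Finset.Icc 1 (N-1), (∑ m : ZMod N, v m * EE N (-m) ^ k) * (∑ n : ZMod N, v n * EE N n ^ k)
      = ∑ k ∈ Finset.range N, (∑ m : ZMod N, v m * EE N (-m) ^ k) * (∑ n : ZMod N, v n * EE N n ^ k) := by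
    rw [hrange, Finset.sum_insert h0]
    simp [hv]
  rw [hIcc]
  have expand : ∀ k : ℕ, (∑ m : ZMod N, v m * EE N (-m) ^ k) * (∑ n : ZMod N, v n * EE N n ^ k)
      = ∑ m : ZMod N, ∑ n : ZMod N, v m * v n * EE N (n - m) ^ k := by
    intro k
    rw [Finset.sum_mul_sum]
    refine Finset.sum_congr rfl fun m _ => Finset.sum_congr rfl fun n _ => ?_
    have h : EE N (n - m) = EE N (-m) * EE N n := by
      rw [← EE_add]; congr 1; ring
    rw [h, mul_pow]; ring
  rw [Finset.sum_congr rfl fun k _ => expand k]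
  rw [Finset.sum_comm]
  rw [Finset.sum_congr rfl fun m (_ : m ∈ Finset.univ) => Finset.sum_comm]
  have inner : ∀ m : ZMod N, ∑ n : ZMod N, ∑ k ∈ Finset.range N, v m * v n * EE N (n - m) ^ k
      = v m * v m * N := by
    intro m
    have h1 : ∀ n : ZMod N, ∑ k ∈ Finset.range N, v m * v n * EE N (n - m) ^ k
        = v m * v n * (if n - m = 0 then (N:ℂ) else 0) := by
      intro n
      rw [← Finset.mul_sum, EE_orth]
    rw [Finset.sum_congr rfl fun n _ => h1 n]
    have h2 : ∀ n : ZMod N, v m * v n * (if n - m = 0 then (N:ℂ) else 0)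
        = if n = m then v m * v n * N else 0 := by
      intro n
      by_cases h : n = m <;> simp [h, sub_eq_zero]
    rw [Finset.sum_congr rfl fun n _ => h2 n, Finset.sum_ite_eq' Finset.univ m]
    simp
  rw [Finset.sum_congr rfl fun m _ => inner m, Finset.mul_sum]
  exact Finset.sum_congr rfl fun m _ => by ring

end BosonizationHelpers


/-- Bosonization identity: with cyclic indices modulo `N`, the substitution
`S_{ii} = (N/(2πi))(v_{i−1} − v_i)`, `S_{i,i+1} = MN·e(u_i)`,
`S_{i+1,i} = MN·e(−u_i)` (`e(z) = exp(2πi z)`, `Σ uᵢ = Σ vᵢ = 0`) satisfies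
`Σᵢ S_{i,i+1}·S_{i,i-1} = M²N²·Σᵢ e(u_{i+1} − u_i)` and turns the limiting top
Hamiltonian into `N²` times the periodic Toda Hamiltonian:
`(−π²/N)·Σ_{m,n} Σ_{k=1}^{N-1} S_{mm} S_{nn} e(k(n−m)/N)(1−cos(2πk/N))⁻¹
  + 4π² Σᵢ S_{i,i+1} S_{i,i-1}
  = N²·((1/2)Σ vᵢ² + 4π²M² Σ e(u_{i+1} − u_i))`. -/
theorem bosonization_toda (N : ℕ) [NeZero N] (hN : 2 ≤ N) (M : ℂ)
    (u v : ZMod N → ℂ) (hu : ∑ i, u i = 0) (hv : ∑ i, v i = 0)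
    (S : ZMod N → ZMod N → ℂ)
    (hSd : ∀ i, S i i = ((N : ℂ) / (2 * Real.pi * Complex.I)) * (v (i - 1) - v i))
    (hSu : ∀ i, S i (i + 1) = M * N * Complex.exp (2 * Real.pi * Complex.I * u i))
    (hSl : ∀ i, S (i + 1) i = M * N * Complex.exp (-(2 * Real.pi * Complex.I * u i))) :
    (∑ i, S i (i + 1) * S i (i - 1) =
      M ^ 2 * (N : ℂ) ^ 2 * ∑ i, Complex.exp (2 * Real.pi * Complex.I * (u (i + 1) - u i))) ∧
    (-(Real.pi : ℂ) ^ 2 / N *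
        ∑ m : ZMod N, ∑ n : ZMod N, ∑ k ∈ Finset.Icc 1 (N - 1),
          S m m * S n n *
            Complex.exp (2 * Real.pi * Complex.I * ((k : ℂ) * ((n - m).val : ℂ) / N)) *
            (1 - Complex.cos (2 * Real.pi * (k : ℂ) / N))⁻¹
      + 4 * (Real.pi : ℂ) ^ 2 * ∑ i, S i (i + 1) * S i (i - 1)
      = (N : ℂ) ^ 2 *
        ((1 / 2) * ∑ i, (v i) ^ 2 +
          4 * (Real.pi : ℂ) ^ 2 * M ^ 2 *
            ∑ i, Complex.exp (2 * Real.pi * Complex.I * (u (i + 1) - u i)))) := by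
  have hNC : (N:ℂ) ≠ 0 := Nat.cast_ne_zero.mpr (NeZero.ne N)
  have hpi : ((Real.pi:ℂ)) ≠ 0 := Complex.ofReal_ne_zero.mpr Real.pi_ne_zero
  have hc0 : (2 * (Real.pi:ℂ) * Complex.I) ≠ 0 := by
    simp [Real.pi_ne_zero, Complex.I_ne_zero]
  -- Part 1
  have part1 : (∑ i, S i (i + 1) * S i (i - 1) =
      M ^ 2 * (N : ℂ) ^ 2 * ∑ i, Complex.exp (2 * Real.pi * Complex.I * (u (i + 1) - u i))) := by
    have hterm : ∀ i : ZMod N, S i (i+1) * S i (i-1)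
        = M^2 * (N:ℂ)^2 * Complex.exp (2*Real.pi*Complex.I * (u i - u (i-1))) := by
      intro i
      have h2 : S i (i-1) = M * N * Complex.exp (-(2 * Real.pi * Complex.I * u (i-1))) := by
        have := hSl (i-1); rwa [sub_add_cancel] at this
      rw [hSu i, h2]
      calc M * ↑N * cexp (2 * ↑Real.pi * I * u i) * (M * ↑N * cexp (-(2 * ↑Real.pi * I * u (i - 1))))
          = M^2 * (N:ℂ)^2 * (cexp (2 * ↑Real.pi * I * u i) * cexp (-(2 * ↑Real.pi * I * u (i - 1)))) := by ring
        _ = M^2 * (N:ℂ)^2 * cexp (2*Real.pi*Complex.I * (u i - u (i-1))) := by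
            rw [← Complex.exp_add]; congr 1; ring
    rw [Finset.sum_congr rfl (fun i _ => hterm i), ← Finset.mul_sum]
    congr 1
    exact Fintype.sum_equiv (Equiv.subRight (1:ZMod N)) _ _ (fun i => by simp [sub_add_cancel])
  refine ⟨part1, ?_⟩
  -- Part 2
  -- Step A: factor the triple sum with k outermost
  have hterm : ∀ (m n : ZMod N) (k : ℕ),
      S m m * S n n * Complex.exp (2 * Real.pi * Complex.I * ((k : ℂ) * ((n - m).val : ℂ) / N))
        * (1 - Complex.cos (2 * Real.pi * (k:ℂ) / N))⁻¹
      = (((N:ℂ)/(2 * Real.pi * Complex.I)) * ((v (m-1) - v m) * EE N (-m) ^ k))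
        * (((N:ℂ)/(2 * Real.pi * Complex.I)) * ((v (n-1) - v n) * EE N n ^ k))
        * (1 - Complex.cos (2 * Real.pi * (k:ℂ) / N))⁻¹ := by
    intro m n k
    rw [hSd m, hSd n, ← EE_pow_eq]
    have h : EE N (n - m) = EE N (-m) * EE N n := by
      rw [← EE_add]; congr 1; ring
    rw [h, mul_pow]
    ring
  have swap : (∑ m : ZMod N, ∑ n : ZMod N, ∑ k ∈ Finset.Icc 1 (N - 1),
        S m m * S n n * Complex.exp (2 * Real.pi * Complex.I * ((k : ℂ) * ((n - m).val : ℂ) / N))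
          * (1 - Complex.cos (2 * Real.pi * (k:ℂ) / N))⁻¹)
      = ∑ k ∈ Finset.Icc 1 (N - 1),
          (((N:ℂ)/(2 * Real.pi * Complex.I)) * ((EE N (-1) ^ k - 1) * ∑ m : ZMod N, v m * EE N (-m) ^ k))
          * (((N:ℂ)/(2 * Real.pi * Complex.I)) * ((EE N 1 ^ k - 1) * ∑ n : ZMod N, v n * EE N n ^ k))
          * (1 - Complex.cos (2 * Real.pi * (k:ℂ) / N))⁻¹ := by
    rw [Finset.sum_congr rfl fun m (_ : m ∈ Finset.univ) => Finset.sum_comm]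
    rw [Finset.sum_comm]
    refine Finset.sum_congr rfl fun k _ => ?_
    rw [← sumW N v k, ← sumV N v k, Finset.mul_sum, Finset.mul_sum, Finset.sum_mul_sum,
      Finset.sum_mul]
    refine Finset.sum_congr rfl fun m _ => ?_
    rw [Finset.sum_mul]
    exact Finset.sum_congr rfl fun n _ => by rw [hterm m n k]; try ring
  rw [swap, part1]
  -- Step B: simplify each k-term via the cosine identity
  have hstep2 : ∀ k ∈ Finset.Icc 1 (N-1),
      (((N:ℂ)/(2 * Real.pi * Complex.I)) * ((EE N (-1) ^ k - 1) * ∑ m : ZMod N, v m * EE N (-m) ^ k))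
        * (((N:ℂ)/(2 * Real.pi * Complex.I)) * ((EE N 1 ^ k - 1) * ∑ n : ZMod N, v n * EE N n ^ k))
        * (1 - Complex.cos (2 * Real.pi * (k:ℂ) / N))⁻¹
      = (-(N:ℂ)^2/(2 * (Real.pi:ℂ)^2)) *
          ((∑ m : ZMod N, v m * EE N (-m) ^ k) * (∑ n : ZMod N, v n * EE N n ^ k)) := by
    intro k hk
    obtain ⟨hcos2, hcosne⟩ := cosFact N hN k hk
    have hw : (1 - Complex.cos (2 * Real.pi * (k:ℂ) / N)) * (1 - Complex.cos (2 * Real.pi * (k:ℂ) / N))⁻¹ = 1 :=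
      mul_inv_cancel₀ hcosne
    have hc2 : (2 * (Real.pi:ℂ) * Complex.I)^2 = -(4 * (Real.pi:ℂ)^2) := by
      rw [mul_pow, mul_pow, Complex.I_sq]; ring
    have hcoef : ((N:ℂ)/(2 * Real.pi * Complex.I))^2 * 2 = -(N:ℂ)^2/(2 * (Real.pi:ℂ)^2) := by
      rw [div_pow, hc2]
      field_simp
      ring
    set W := ∑ m : ZMod N, v m * EE N (-m) ^ k
    set V := ∑ n : ZMod N, v n * EE N n ^ k
    set w := (1 - Complex.cos (2 * Real.pi * (k:ℂ) / N))⁻¹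
    calc (((N:ℂ)/(2 * Real.pi * Complex.I)) * ((EE N (-1) ^ k - 1) * W))
          * (((N:ℂ)/(2 * Real.pi * Complex.I)) * ((EE N 1 ^ k - 1) * V)) * w
        = ((N:ℂ)/(2 * Real.pi * Complex.I))^2 * ((EE N 1 ^ k - 1) * (EE N (-1) ^ k - 1)) * w * (W * V) := by
          ring
      _ = ((N:ℂ)/(2 * Real.pi * Complex.I))^2 * (2 * (1 - Complex.cos (2 * Real.pi * (k:ℂ) / N))) * w * (W * V) := by
          rw [← hcos2]
      _ = (((N:ℂ)/(2 * Real.pi * Complex.I))^2 * 2) * (W * V) := by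
          linear_combination (((N:ℂ)/(2 * Real.pi * Complex.I))^2 * 2 * (W * V)) * hw
      _ = (-(N:ℂ)^2/(2 * (Real.pi:ℂ)^2)) * (W * V) := by rw [hcoef]
  rw [Finset.sum_congr rfl hstep2, ← Finset.mul_sum, parseval N v hv]
  -- Final arithmetic
  field_simp
end
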